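/- arXiv:2604.18769 — 2 statements merged into one kernel-verified Lean document; each statement's English description precedes it below -/
import Mathlib

section
/- For every domain D in the d-regular tree T_d with |D| = k ≥ 2, the inner vertex boundary satisfies |∂D| ≥ ⌈((d−2)·k + 2)/(d−1)⌉. -/
/-- Inner vertex boundary of a finite vertex set `D`: vertices of `D` having a neighbor
outside `D`. -/
noncomputable def innerBoundary {V : Type*} (G : SimpleGraph V) (D : Finset V) : Finset V := by
  classical exact D.filter (fun x => ∃ y, y ∉ D ∧ G.Adj x y)

/-- Outer vertex boundary of `D`: vertices outside `D` having a neighbor in `D`. -/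
def outerBoundary {V : Type*} (G : SimpleGraph V) (D : Finset V) : Set V :=
  {y | y ∉ D ∧ ∃ x ∈ D, G.Adj x y}

/-- Number of neighbors of `x` lying in `D`. -/
noncomputable def degIn {V : Type*} (G : SimpleGraph V) (D : Finset V) (x : V) : ℕ := by
  classical exact (D.filter (fun y => G.Adj x y)).card

/-- A domain: a finite nonempty vertex set whose induced subgraph is connected. -/
def IsGraphDomain {V : Type*} (G : SimpleGraph V) (D : Finset V) : Prop :=
  D.Nonempty ∧ (G.induce (↑D : Set V)).Connected

/-- `G` is a `d`-regular tree: connected, acyclic, and every vertex has degree `d`. -/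
def IsRegularTree {V : Type*} (G : SimpleGraph V) (d : ℕ) : Prop :=
  G.Connected ∧ G.IsAcyclic ∧ ∀ v : V, (G.neighborSet v).ncard = d

/-- Boundary branching excess `τ(D) = Σ_{x ∈ ∂D} (deg_D(x) − 1)`. -/
noncomputable def tauD {V : Type*} (G : SimpleGraph V) (D : Finset V) : ℕ :=
  ∑ x ∈ innerBoundary G D, (degIn G D x - 1)

/-- Residual boundary `R(D) = {x ∈ ∂D : deg_D(x) ≥ 2}`. -/
noncomputable def residualBoundary {V : Type*} (G : SimpleGraph V) (D : Finset V) : Finset V := by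
  classical exact (innerBoundary G D).filter (fun x => 2 ≤ degIn G D x)

/-- `D` is isoperimetrically optimal: its inner boundary is smallest among all domains
of the same cardinality. -/
def IsOptimal {V : Type*} (G : SimpleGraph V) (D : Finset V) : Prop :=
  ∀ D' : Finset V, IsGraphDomain G D' → D'.card = D.card →
    (innerBoundary G D).card ≤ (innerBoundary G D').card

/-- Lower bound: every domain of size `k ≥ 2` satisfies `|∂D| ≥ ⌈((d−2)k+2)/(d−1)⌉`. -/
theorem stmt_4 {V : Type*} (d : ℕ) (hd : 2 ≤ d) (T : SimpleGraph V)
    (hT : IsRegularTree T d) (D : Finset V) (hD : IsGraphDomain T D) (hcard : 2 ≤ D.card) :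
    ⌈(((d : ℚ) - 2) * (D.card : ℚ) + 2) / ((d : ℚ) - 1)⌉ ≤ ((innerBoundary T D).card : ℤ) := by
  classical
  obtain ⟨hconn, hac, hreg⟩ := hT
  obtain ⟨hne, hcD⟩ := hD
  set H := T.induce (↑D : Set V) with hH
  have hacH : H.IsAcyclic := by
    intro v c hc'
    exact hac _ (hc'.map (f := (SimpleGraph.Embedding.induce (G := T) (↑D : Set V)).toHom)
      (SimpleGraph.Embedding.induce (G := T) (↑D : Set V)).injective)
  have htree : H.IsTree := ⟨hcD, hacH⟩
  haveI : DecidableRel H.Adj := Classical.decRel _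
  haveI : DecidableEq (↑D : Set V) := Classical.decEq _
  have hed : H.edgeFinset.card + 1 = Fintype.card (↑D : Set V) := htree.card_edgeFinset
  have hsum0 : ∑ v, H.degree v = 2 * H.edgeFinset.card := H.sum_degrees_eq_twice_card_edges
  -- degIn as a filter card
  have hdegIn : ∀ x, degIn T D x = (D.filter (fun y => T.Adj x y)).card := by
    intro x
    simp [degIn]
  -- degree in H equals degIn
  have hdeg : ∀ (x : V) (hx : x ∈ D), H.degree ⟨x, hx⟩ = degIn T D x := by
    intro x hx
    rw [hdegIn, SimpleGraph.degree]
    refine Finset.card_bij (fun a _ => (a : V)) ?_ ?_ ?_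
    · intro a ha
      simp only [SimpleGraph.mem_neighborFinset] at ha
      simp only [Finset.mem_filter]
      exact ⟨a.2, ha⟩
    · intro a _ b _ h
      exact Subtype.ext h
    · intro y hy
      simp only [Finset.mem_filter] at hy
      exact ⟨⟨y, hy.1⟩, (SimpleGraph.mem_neighborFinset _ _ _).mpr hy.2, rfl⟩
  -- total degree sum
  have hsum : ∑ x ∈ D, degIn T D x = 2 * (D.card - 1) := by
    have h1 : ∑ v : (↑D : Set V), H.degree v = ∑ x ∈ D, degIn T D x := by
      rw [← Finset.sum_finset_coe (fun x => degIn T D x) D]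
      refine Finset.sum_congr rfl (fun v _ => ?_)
      have := hdeg v.1 v.2
      simpa using this
    have h2 : Fintype.card (↑D : Set V) = D.card := by simp
    rw [← h1, hsum0]
    omega
  set B := innerBoundary T D with hB
  have hBsub : B ⊆ D := Finset.filter_subset _ _
  -- interior vertices have full degree d
  have hfull : ∀ x ∈ D \ B, degIn T D x = d := by
    intro x hx
    rw [Finset.mem_sdiff] at hx
    obtain ⟨hxD, hxB⟩ := hx
    have hall : ∀ y, T.Adj x y → y ∈ D := by
      intro y hy
      by_contra hyD
      exact hxB (Finset.mem_filter.mpr ⟨hxD, ⟨y, hyD, hy⟩⟩)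
    have hfin : (T.neighborSet x).Finite :=
      Set.finite_of_ncard_ne_zero (by rw [hreg x]; omega)
    have hset : (↑(D.filter (fun y => T.Adj x y)) : Set V) = T.neighborSet x := by
      ext y
      simp only [Finset.coe_filter, Set.mem_setOf_eq, SimpleGraph.mem_neighborSet]
      exact ⟨fun h => h.2, fun h => ⟨hall y h, h⟩⟩
    rw [hdegIn x, ← Set.ncard_coe_finset, hset, hreg x]
  -- every vertex of D has a neighbor in D
  have hone : ∀ x ∈ D, 1 ≤ degIn T D x := by
    intro x hx
    obtain ⟨y, hy, hyx⟩ := Finset.exists_mem_ne (s := D) (by omega) x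
    obtain ⟨p⟩ := hcD.preconnected ⟨x, hx⟩ ⟨y, hy⟩
    have hpn : ¬ p.Nil := SimpleGraph.Walk.not_nil_of_ne
      (by simp only [ne_eq, Subtype.mk.injEq]; exact fun h => hyx h.symm)
    obtain ⟨u, hadj, q, rfl⟩ := SimpleGraph.Walk.not_nil_iff.mp hpn
    have hv : (u : V) ∈ D := u.2
    have hadj' : T.Adj x (u : V) := hadj
    rw [hdegIn x]
    exact Finset.card_pos.mpr ⟨u, Finset.mem_filter.mpr ⟨hv, hadj'⟩⟩
  -- combine
  have hsplit : ∑ x ∈ D \ B, degIn T D x + ∑ x ∈ B, degIn T D x = ∑ x ∈ D, degIn T D x :=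
    Finset.sum_sdiff hBsub
  have hDB : ∑ x ∈ D \ B, degIn T D x = (D.card - B.card) * d := by
    rw [Finset.sum_congr rfl hfull, Finset.sum_const, Finset.card_sdiff_of_subset hBsub, smul_eq_mul]
  have hBlow : B.card ≤ ∑ x ∈ B, degIn T D x := by
    calc B.card = ∑ _x ∈ B, 1 := by simp
    _ ≤ ∑ x ∈ B, degIn T D x := Finset.sum_le_sum (fun x hx => hone x (hBsub hx))
  set k := D.card with hk
  set b := B.card with hb
  have hbk : b ≤ k := Finset.card_le_card hBsub
  have hkey : (k - b) * d + b ≤ 2 * (k - 1) := by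
    calc (k - b) * d + b ≤ (k - b) * d + ∑ x ∈ B, degIn T D x := Nat.add_le_add_left hBlow _
    _ = ∑ x ∈ D \ B, degIn T D x + ∑ x ∈ B, degIn T D x := by rw [hDB]
    _ = ∑ x ∈ D, degIn T D x := hsplit
    _ = 2 * (k - 1) := hsum
  -- cast to ℚ
  have hQ : ((d : ℚ) - 2) * k + 2 ≤ (b : ℚ) * ((d : ℚ) - 1) := by
    have h1 : ((k : ℚ) - b) * d + b ≤ 2 * ((k : ℚ) - 1) := by
      have := hkey
      have e1 : (((k - b) * d + b : ℕ) : ℚ) = ((k : ℚ) - b) * d + b := by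
        push_cast [Nat.cast_sub hbk]; ring
      have e2 : ((2 * (k - 1) : ℕ) : ℚ) = 2 * ((k : ℚ) - 1) := by
        push_cast [Nat.cast_sub (by omega : 1 ≤ k)]; ring
      rw [← e1, ← e2]
      exact_mod_cast this
    have hd2 : (2 : ℚ) ≤ (d : ℚ) := by exact_mod_cast hd
    nlinarith [h1]
  rw [Int.ceil_le]
  have hdpos : (0 : ℚ) < (d : ℚ) - 1 := by
    have : (2 : ℚ) ≤ (d : ℚ) := by exact_mod_cast hd
    linarith
  rw [div_le_iff₀ hdpos]
  push_cast
  exact hQ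
end

section
/- For every integer k ≥ 2 there exists a domain D in the d-regular tree T_d with |D| = k and |∂D| = ⌈((d−2)·k + 2)/(d−1)⌉. Consequently the inner vertex-isoperimetric profile of T_d is I_d(k) = ⌈((d−2)·k + 2)/(d−1)⌉ for all k ≥ 2. -/
/-!
Counting the edges of the induced tree on a domain `D` with `|D| = k ≥ 2` gives
`Σ_{x ∈ D} deg_D x = 2(k - 1)`. Interior vertices have `deg_D = d` and boundary
vertices `1 ≤ deg_D ≤ d - 1`, whence `(d - 1)|∂D| = (d - 2)k + 2 + τ(D)` with `τ(D) ≥ 0`: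
this is the lower bound. For the upper bound, grow a domain one leaf at a time, always
attaching the new leaf to the boundary vertex of `D`-degree `≥ 2` if there is one. Since
the new leaf has a single neighbour in `D`, at most one boundary vertex ever has
`D`-degree `≥ 2`, so `τ(D) ≤ d - 2`.
-/

open Finset SimpleGraph

section Boundary

variable {V : Type*} {G : SimpleGraph V} {D : Finset V} {x v y : V}

lemma mem_innerBoundary : x ∈ innerBoundary G D ↔ x ∈ D ∧ ∃ y, y ∉ D ∧ G.Adj x y := by
  simp [innerBoundary]

lemma innerBoundary_subset : innerBoundary G D ⊆ D := fun _ hx => (mem_innerBoundary.mp hx).1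

lemma innerBoundary_insert_subset [DecidableEq V] :
    innerBoundary G (insert v D) ⊆ insert v (innerBoundary G D) := by
  intro y hy
  obtain ⟨hyD, z, hz, hyz⟩ := mem_innerBoundary.mp hy
  rcases mem_insert.mp hyD with rfl | hyD
  · exact mem_insert_self _ _
  · exact mem_insert_of_mem
      (mem_innerBoundary.mpr ⟨hyD, z, fun h => hz (mem_insert_of_mem h), hyz⟩)

lemma mem_residualBoundary :
    x ∈ residualBoundary G D ↔ x ∈ innerBoundary G D ∧ 2 ≤ degIn G D x := by
  simp [residualBoundary]

lemma residualBoundary_subset : residualBoundary G D ⊆ innerBoundary G D :=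
  fun _ hx => (mem_residualBoundary.mp hx).1

lemma degIn_eq_card_filter [DecidablePred (G.Adj x)] : degIn G D x = #(D.filter (G.Adj x)) := by
  unfold degIn
  convert rfl

lemma degIn_insert_of_not_adj [DecidableEq V] (h : ¬ G.Adj y v) :
    degIn G (insert v D) y = degIn G D y := by
  classical
  rw [degIn_eq_card_filter, degIn_eq_card_filter, filter_insert, if_neg h]

end Boundary

section LocallyFinite

variable {V : Type*} {G : SimpleGraph V} [G.LocallyFinite] {D : Finset V} {x : V} {d : ℕ}

lemma isRegularOfDegree_iff_ncard_neighborSet :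
    G.IsRegularOfDegree d ↔ ∀ v, (G.neighborSet v).ncard = d := by
  simp only [IsRegularOfDegree, ← card_neighborSet_eq_degree, Set.ncard_eq_toFinset_card',
    Set.toFinset_card]

lemma filter_adj_subset_neighborFinset [DecidablePred (G.Adj x)] :
    D.filter (G.Adj x) ⊆ G.neighborFinset x := fun y hy => by
  simpa using (mem_filter.mp hy).2

lemma degIn_lt_degree_iff : degIn G D x < G.degree x ↔ ∃ y, y ∉ D ∧ G.Adj x y := by
  classical
  have hsub : D.filter (G.Adj x) ⊆ G.neighborFinset x := filter_adj_subset_neighborFinset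
  rw [degIn_eq_card_filter, ← card_neighborFinset_eq_degree]
  constructor
  · intro hlt
    have hss := hsub.ssubset_of_ne (by rintro heq; rw [heq] at hlt; exact lt_irrefl _ hlt)
    obtain ⟨y, hyN, hy⟩ := (ssubset_iff_of_subset hsub).mp hss
    rw [mem_neighborFinset] at hyN
    exact ⟨y, fun hyD => hy (mem_filter.mpr ⟨hyD, hyN⟩), hyN⟩
  · rintro ⟨y, hyD, hxy⟩
    exact card_lt_card ((ssubset_iff_of_subset hsub).mpr ⟨y, by simpa using hxy, by simp [hyD]⟩)

lemma degIn_le_degree : degIn G D x ≤ G.degree x := by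
  classical
  rw [degIn_eq_card_filter, ← card_neighborFinset_eq_degree]
  exact card_le_card filter_adj_subset_neighborFinset

lemma mem_innerBoundary_iff_degIn_lt_degree (hx : x ∈ D) :
    x ∈ innerBoundary G D ↔ degIn G D x < G.degree x := by
  rw [mem_innerBoundary, degIn_lt_degree_iff, and_iff_right hx]

lemma tauD_le (hreg : G.IsRegularOfDegree d) :
    tauD G D ≤ #(residualBoundary G D) * (d - 2) := by
  have hterm : ∀ x ∈ innerBoundary G D, x ∉ residualBoundary G D → degIn G D x - 1 = 0 :=
    fun x hx hxR => by
      have := mt (fun h => mem_residualBoundary.mpr ⟨hx, h⟩) hxR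
      omega
  rw [tauD, ← sum_subset residualBoundary_subset hterm]
  refine sum_le_card_nsmul _ _ _ fun x hx => ?_
  have hxB := residualBoundary_subset hx
  have := (mem_innerBoundary_iff_degIn_lt_degree (innerBoundary_subset hxB)).mp hxB
  rw [hreg x] at this
  omega

end LocallyFinite

section Domain

variable {V : Type*} {G : SimpleGraph V} {D : Finset V} {x v y : V}

lemma degree_induce_eq_degIn (u : (D : Set V)) [Fintype ((G.induce (D : Set V)).neighborSet u)] :
    (G.induce (D : Set V)).degree u = degIn G D u := by
  classical
  rw [degIn_eq_card_filter, ← card_neighborFinset_eq_degree]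
  refine card_bij (fun w _ => w.1) (fun w hw => ?_) (fun _ _ _ _ => Subtype.ext)
    (fun w hw => ?_)
  · simpa using hw
  · rw [mem_filter] at hw
    exact ⟨⟨w, hw.1⟩, by simpa using hw.2, rfl⟩

lemma sum_degIn_add_two (hac : G.IsAcyclic) (hD : IsGraphDomain G D) :
    ∑ x ∈ D, degIn G D x + 2 = 2 * #D := by
  classical
  have htree : (G.induce (D : Set V)).IsTree := ⟨hD.2, hac.induce _⟩
  have hedges := htree.card_edgeFinset
  have hsum := (G.induce (D : Set V)).sum_degrees_eq_twice_card_edges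
  simp only [degree_induce_eq_degIn] at hsum
  have hcard : Fintype.card (D : Set V) = #D := by simp
  rw [show ∑ x : (D : Set V), degIn G D x = ∑ x ∈ D, degIn G D x from
    sum_coe_sort D _] at hsum
  omega

lemma IsGraphDomain.one_le_degIn (hD : IsGraphDomain G D) (hcard : 2 ≤ #D) (hx : x ∈ D) :
    1 ≤ degIn G D x := by
  classical
  have : Nontrivial (D : Set V) :=
    Set.nontrivial_coe_sort.mpr (one_lt_card_iff_nontrivial.mp hcard)
  rw [← degree_induce_eq_degIn ⟨x, hx⟩]
  exact hD.2.preconnected.degree_pos_of_nontrivial _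

lemma IsGraphDomain.eq_of_adj_of_adj (hac : G.IsAcyclic) (hD : IsGraphDomain G D) (hv : v ∉ D)
    (hx : x ∈ D) (hy : y ∈ D) (hxv : G.Adj x v) (hyv : G.Adj y v) : x = y := by
  -- a path from `x` to `y` inside `D` followed by the edge `y v` avoids the bridge `x v`
  by_contra hxy
  refine isAcyclic_iff_forall_adj_isBridge.mp hac hxv ?_
  let f : G.induce (D : Set V) →g G.deleteEdges {s(x, v)} :=
    ⟨Subtype.val, fun {a b} hab => by
      refine (deleteEdges_adj ..).mpr ⟨hab, ?_⟩
      rw [Set.mem_singleton_iff, Sym2.eq_iff]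
      rintro (⟨-, h⟩ | ⟨h, -⟩)
      exacts [hv (h ▸ b.2), hv (h ▸ a.2)]⟩
  have hxy' := (hD.2.preconnected ⟨x, hx⟩ ⟨y, hy⟩).map f
  refine hxy'.trans (Adj.reachable ?_)
  refine (deleteEdges_adj ..).mpr ⟨hyv, ?_⟩
  rw [Set.mem_singleton_iff, Sym2.eq_iff]
  rintro (⟨h, -⟩ | ⟨h, -⟩)
  exacts [hxy h.symm, hv (h ▸ hy)]

lemma IsGraphDomain.degIn_le_one_of_notMem (hac : G.IsAcyclic) (hD : IsGraphDomain G D)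
    (hv : v ∉ D) : degIn G D v ≤ 1 := by
  classical
  rw [degIn_eq_card_filter, card_le_one]
  intro a ha b hb
  rw [mem_filter] at ha hb
  exact hD.eq_of_adj_of_adj hac hv ha.1 hb.1 ha.2.symm hb.2.symm

lemma IsGraphDomain.insert_of_adj [DecidableEq V] (hD : IsGraphDomain G D) (hx : x ∈ D)
    (hxv : G.Adj x v) : IsGraphDomain G (insert v D) := by
  refine ⟨insert_nonempty _ _, ?_⟩
  rw [coe_insert, ← Set.union_singleton]
  exact connected_induce_union hD.2.preconnected (by simp [induce_singleton_eq_top]) hx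
    (Set.mem_singleton v) hxv

end Domain

section RegularForest

variable {V : Type*} {G : SimpleGraph V} [G.LocallyFinite] {d : ℕ} {D : Finset V}

lemma sum_degIn_eq_mul_card_sdiff_add [DecidableEq V] (hreg : G.IsRegularOfDegree d) :
    ∑ x ∈ D, degIn G D x =
      d * #(D \ innerBoundary G D) + ∑ x ∈ innerBoundary G D, degIn G D x := by
  have hinterior : ∀ x ∈ D \ innerBoundary G D, degIn G D x = d := fun x hx => by
    obtain ⟨hxD, hxB⟩ := mem_sdiff.mp hx
    rw [mem_innerBoundary_iff_degIn_lt_degree hxD, hreg x] at hxB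
    have := hreg x ▸ degIn_le_degree (G := G) (D := D) (x := x)
    omega
  rw [← sum_sdiff innerBoundary_subset, sum_const_nat hinterior, mul_comm]

variable (hreg : G.IsRegularOfDegree d) (hac : G.IsAcyclic)
include hreg hac

lemma IsGraphDomain.innerBoundary_nonempty (hd : 2 ≤ d) (hD : IsGraphDomain G D) :
    (innerBoundary G D).Nonempty := by
  classical
  by_contra hB
  have hsum := sum_degIn_eq_mul_card_sdiff_add hreg (D := D)
  rw [not_nonempty_iff_eq_empty.mp hB, sdiff_empty, sum_empty] at hsum
  have := sum_degIn_add_two hac hD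
  have := hD.1.card_pos
  nlinarith

lemma IsGraphDomain.sub_one_mul_card_innerBoundary (hD : IsGraphDomain G D) (hk : 2 ≤ #D) :
    ((d : ℤ) - 1) * #(innerBoundary G D) = ((d : ℤ) - 2) * #D + 2 + tauD G D := by
  classical
  have htau : ∑ x ∈ innerBoundary G D, degIn G D x = tauD G D + #(innerBoundary G D) := by
    rw [tauD, card_eq_sum_ones, ← sum_add_distrib]
    exact sum_congr rfl fun x hx =>
      (Nat.sub_add_cancel (hD.one_le_degIn hk (innerBoundary_subset hx))).symm
  have hsum := sum_degIn_add_two hac hD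
  rw [sum_degIn_eq_mul_card_sdiff_add hreg, htau,
    card_sdiff_of_subset innerBoundary_subset] at hsum
  have := card_le_card (innerBoundary_subset (G := G) (D := D))
  zify [this] at hsum
  linarith

lemma IsGraphDomain.exists_card_succ_residualBoundary_le_one (hd : 2 ≤ d)
    (hD : IsGraphDomain G D) (hR : #(residualBoundary G D) ≤ 1) :
    ∃ D', IsGraphDomain G D' ∧ #D' = #D + 1 ∧ #(residualBoundary G D') ≤ 1 := by
  classical
  obtain ⟨x, hxB, hRx⟩ : ∃ x ∈ innerBoundary G D, residualBoundary G D ⊆ {x} := by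
    rcases (residualBoundary G D).eq_empty_or_nonempty with hRe | ⟨x, hxR⟩
    · obtain ⟨x, hx⟩ := hD.innerBoundary_nonempty hreg hac hd
      exact ⟨x, hx, by simp [hRe]⟩
    · exact ⟨x, residualBoundary_subset hxR,
        fun y hy => mem_singleton.mpr (card_le_one.mp hR y hy x hxR)⟩
  obtain ⟨hxD, v, hv, hxv⟩ := mem_innerBoundary.mp hxB
  refine ⟨insert v D, hD.insert_of_adj hxD hxv, card_insert_of_notMem hv, ?_⟩
  suffices residualBoundary G (insert v D) ⊆ {x} from
    (card_le_card this).trans_eq (card_singleton x)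
  intro y hy
  rw [mem_singleton]
  by_contra hyx
  obtain ⟨hyB, hy2⟩ := mem_residualBoundary.mp hy
  have hyv : ¬ G.Adj y v := by
    rcases mem_insert.mp (innerBoundary_subset hyB) with rfl | hyD
    · exact G.irrefl
    · exact fun h => hyx (hD.eq_of_adj_of_adj hac hv hyD hxD h hxv)
  rw [degIn_insert_of_not_adj hyv] at hy2
  rcases mem_insert.mp (innerBoundary_insert_subset hyB) with rfl | hyB'
  · exact absurd (hD.degIn_le_one_of_notMem hac hv) (by omega)
  · exact hyx (mem_singleton.mp (hRx (mem_residualBoundary.mpr ⟨hyB', hy2⟩)))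

lemma exists_isGraphDomain_card_residualBoundary_le_one [Nonempty V] (hd : 2 ≤ d) {k : ℕ}
    (hk : 1 ≤ k) : ∃ D, IsGraphDomain G D ∧ #D = k ∧ #(residualBoundary G D) ≤ 1 := by
  induction k, hk using Nat.le_induction with
  | base =>
    obtain ⟨u⟩ := ‹Nonempty V›
    refine ⟨{u}, ⟨singleton_nonempty u, by
      rw [coe_singleton, induce_singleton_eq_top]; exact connected_top⟩, card_singleton u, ?_⟩
    exact (card_le_card (residualBoundary_subset.trans innerBoundary_subset)).trans_eq
      (card_singleton u)
  | succ k _ ih =>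
    obtain ⟨D, hD, rfl, hR⟩ := ih
    exact hD.exists_card_succ_residualBoundary_le_one hreg hac hd hR

end RegularForest

section Ceil

variable {K : Type*} [Field K] [LinearOrder K] [IsStrictOrderedRing K] [FloorRing K] {a m n : ℤ}

lemma ceil_intCast_div_le_iff (hm : 0 < m) : ⌈(a : K) / m⌉ ≤ n ↔ a ≤ m * n := by
  rw [Int.ceil_le, div_le_iff₀ (by exact_mod_cast hm), mul_comm]
  norm_cast

lemma ceil_intCast_div_eq (hm : 0 < m) (h₁ : a ≤ m * n) (h₂ : m * n < a + m) :
    ⌈(a : K) / m⌉ = n := by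
  refine le_antisymm ((ceil_intCast_div_le_iff hm).mpr h₁) ?_
  by_contra hlt
  have := (ceil_intCast_div_le_iff (K := K) hm).mp (Int.le_sub_one_of_lt (not_le.mp hlt))
  linarith [mul_sub_one m n]

end Ceil

/-- The isoperimetric profile of the `d`-regular tree: for every `k ≥ 2`, the value
`⌈((d−2)k+2)/(d−1)⌉` is attained by some domain of size `k` and is the minimum of
`|∂D|` over all domains of size `k`. -/
theorem stmt_5 {V : Type*} (d : ℕ) (hd : 2 ≤ d) (T : SimpleGraph V)
    (hT : IsRegularTree T d) (k : ℕ) (hk : 2 ≤ k) :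
    IsLeast {n : ℤ | ∃ D : Finset V, IsGraphDomain T D ∧ D.card = k ∧
        ((innerBoundary T D).card : ℤ) = n}
      ⌈(((d : ℚ) - 2) * (k : ℚ) + 2) / ((d : ℚ) - 1)⌉ := by
  obtain ⟨hconn, hac, hdeg⟩ := hT
  let : T.LocallyFinite := fun v =>
    (Set.finite_of_ncard_ne_zero (by rw [hdeg v]; omega)).fintype
  have hreg : T.IsRegularOfDegree d := isRegularOfDegree_iff_ncard_neighborSet.mpr hdeg
  have hm : (0 : ℤ) < d - 1 := by omega
  have hq : (((d : ℚ) - 2) * (k : ℚ) + 2) / ((d : ℚ) - 1) =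
      (((d - 2) * k + 2 : ℤ) : ℚ) / ((d - 1 : ℤ) : ℚ) := by push_cast; rfl
  rw [hq]
  refine ⟨?_, ?_⟩
  · have := hconn.nonempty
    obtain ⟨D, hD, rfl, hR⟩ :=
      exists_isGraphDomain_card_residualBoundary_le_one hreg hac hd (by omega : 1 ≤ k)
    have hid := hD.sub_one_mul_card_innerBoundary hreg hac hk
    have hτ : tauD T D ≤ d - 2 := (tauD_le hreg).trans (mul_le_of_le_one_left' hR)
    zify [hd] at hτ
    exact ⟨D, hD, rfl, (ceil_intCast_div_eq hm (by linarith) (by linarith)).symm⟩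
  · rintro _ ⟨D, hD, rfl, rfl⟩
    rw [ceil_intCast_div_le_iff hm]
    have := hD.sub_one_mul_card_innerBoundary hreg hac hk
    linarith [(tauD T D).cast_nonneg (α := ℤ)]
end
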